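/- Let E ∈ ℝ^{n×n}, n = m², with blocks E_{jk}. The minimal Frobenius error of approximating E by a square-block Monarch matrix (N = r = m) equals the square root of Σ_{j,k} Σ_{i≥2} σ_i²(Ẽ_{:,j,k,:}), where Ẽ is E reshaped into a 4-tensor according to the Monarch permutations; in particular the minimum is 0 iff every slice Ẽ_{:,j,k,:} has rank at most 1. -/

import Mathlib

/-!
Index the entries of `E` as `E (l, j) (k, i)`. The Monarch product has entries
`L j l k * R k j i`, so for fixed `(j, k)` it is the rank-one matrix `(L j · k) (R k j ·)ᵀ`, and
the slices for distinct `(j, k)` involve disjoint sets of parameters. The squared error is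
therefore a sum of independent rank-one approximation errors of the slices `E (·, j) (k, ·)`,
and each is minimised by Eckart–Young: writing a slice as `U diag σ Vᵀ` with orthogonal
`U`, `V`, the error of `u vᵀ` equals that of `diag σ - (Uᵀu)(Vᵀv)ᵀ`, which is at least
`∑_{i ≥ 1} σ i ^ 2`, with equality for the leading singular pair.
-/

open Matrix

/-- The perfect-shuffle permutation matrix on `Fin m × Fin m`. -/
def shuffle (m : ℕ) : Matrix (Fin m × Fin m) (Fin m × Fin m) ℝ :=
  Matrix.of fun a b => if a = b.swap then 1 else 0

/-- Block-diagonal matrix on `Fin m × Fin m` with block index in the first coordinate. -/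
def BD {m : ℕ} (L : Fin m → Matrix (Fin m) (Fin m) ℝ) :
    Matrix (Fin m × Fin m) (Fin m × Fin m) ℝ :=
  Matrix.of fun a b => if a.1 = b.1 then L a.1 a.2 b.2 else 0

open Finset

section Frobenius
variable {ι κ : Type*} [Fintype ι] [Fintype κ]

theorem sum_sq_eq_trace_mul_transpose (X : Matrix ι κ ℝ) :
    ∑ i, ∑ j, X i j ^ 2 = trace (X * Xᵀ) := by
  simp [trace, mul_apply, sq]

theorem sum_sq_orthogonal_mul [DecidableEq ι] {U : Matrix ι ι ℝ} (hU : Uᵀ * U = 1)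
    (X : Matrix ι κ ℝ) : ∑ i, ∑ j, (U * X) i j ^ 2 = ∑ i, ∑ j, X i j ^ 2 := by
  rw [sum_sq_eq_trace_mul_transpose, sum_sq_eq_trace_mul_transpose, transpose_mul,
    ← Matrix.mul_assoc, trace_mul_comm, ← Matrix.mul_assoc, ← Matrix.mul_assoc, hU,
    Matrix.one_mul]

theorem sum_sq_mul_orthogonal_transpose [DecidableEq κ] {V : Matrix κ κ ℝ} (hV : Vᵀ * V = 1)
    (X : Matrix ι κ ℝ) : ∑ i, ∑ j, (X * Vᵀ) i j ^ 2 = ∑ i, ∑ j, X i j ^ 2 := by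
  rw [sum_sq_eq_trace_mul_transpose, sum_sq_eq_trace_mul_transpose, transpose_mul,
    transpose_transpose, Matrix.mul_assoc, ← Matrix.mul_assoc Vᵀ, hV, Matrix.one_mul]

theorem sum_sq_orthogonal_mul_mul_transpose [DecidableEq ι] [DecidableEq κ] {U : Matrix ι ι ℝ}
    {V : Matrix κ κ ℝ} (hU : Uᵀ * U = 1) (hV : Vᵀ * V = 1) (X : Matrix ι κ ℝ) :
    ∑ i, ∑ j, (U * X * Vᵀ) i j ^ 2 = ∑ i, ∑ j, X i j ^ 2 := by
  rw [sum_sq_mul_orthogonal_transpose hV, sum_sq_orthogonal_mul hU]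

variable [DecidableEq ι]

theorem sum_sq_diagonal (d : ι → ℝ) : ∑ i, ∑ j, diagonal d i j ^ 2 = ∑ i, d i ^ 2 := by
  simp [diagonal_apply, ite_pow]

theorem sum_sq_diagonal_sub_vecMulVec (σ u v : ι → ℝ) :
    ∑ l, ∑ i, (diagonal σ - vecMulVec u v) l i ^ 2 =
      ∑ i, σ i ^ 2 - 2 * ∑ i, σ i * (u i * v i) + (∑ i, u i ^ 2) * ∑ i, v i ^ 2 := by
  have cross : ∑ l, ∑ i, 2 * diagonal σ l i * (u l * v i) = 2 * ∑ i, σ i * (u i * v i) := by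
    simp [diagonal_apply, mul_sum, mul_assoc]
  simp only [Matrix.sub_apply, vecMulVec_apply, sub_sq, sum_add_distrib, sum_sub_distrib,
    sum_sq_diagonal, cross, mul_pow, sum_mul_sum]

end Frobenius

section RankOne
variable {m : ℕ} [NeZero m] {σ : Fin m → ℝ}

theorem tail_le_sum_sq_diagonal_sub_vecMulVec (hanti : Antitone σ) (hnonneg : ∀ i, 0 ≤ σ i)
    (u v : Fin m → ℝ) :
    ∑ i ∈ univ.erase 0, σ i ^ 2 ≤ ∑ l, ∑ i, (diagonal σ - vecMulVec u v) l i ^ 2 := by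
  set W := ∑ i, |u i| * |v i|
  have cauchy_schwarz : W ^ 2 ≤ (∑ i, u i ^ 2) * ∑ i, v i ^ 2 := by
    simpa only [sq_abs] using sum_mul_sq_le_sq_mul_sq univ (|u ·|) (|v ·|)
  have leading : ∑ i, σ i * (u i * v i) ≤ σ 0 * W := by
    rw [mul_sum]
    refine sum_le_sum fun i _ => ?_
    calc σ i * (u i * v i) ≤ σ i * (|u i| * |v i|) :=
          mul_le_mul_of_nonneg_left (abs_mul (u i) (v i) ▸ le_abs_self _) (hnonneg i)
      _ ≤ σ 0 * (|u i| * |v i|) := by gcongr; exact hanti (Fin.zero_le _)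
  rw [sum_sq_diagonal_sub_vecMulVec, ← add_sum_erase _ _ (mem_univ 0)]
  -- the error is at least `∑ σ² - 2 σ₀ W + W² = ∑_{i ≠ 0} σ² + (W - σ₀)²`
  linarith [sq_nonneg (W - σ 0)]

variable {A U V : Matrix (Fin m) (Fin m) ℝ}

theorem tail_le_sum_sq_sub_vecMulVec (hU : Uᵀ * U = 1) (hV : Vᵀ * V = 1)
    (hA : A = U * diagonal σ * Vᵀ) (hanti : Antitone σ) (hnonneg : ∀ i, 0 ≤ σ i)
    (u v : Fin m → ℝ) :
    ∑ i ∈ univ.erase 0, σ i ^ 2 ≤ ∑ l, ∑ i, (A - vecMulVec u v) l i ^ 2 := by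
  have hUUt : U * Uᵀ = 1 := mul_eq_one_comm.mp hU
  have hVVt : V * Vᵀ = 1 := mul_eq_one_comm.mp hV
  have hconj :
      A - vecMulVec u v = U * (diagonal σ - vecMulVec (Uᵀ *ᵥ u) (Vᵀ *ᵥ v)) * Vᵀ := by
    rw [Matrix.mul_sub, Matrix.sub_mul, ← hA, mul_vecMulVec, vecMulVec_mul, vecMul_transpose,
      mulVec_mulVec, mulVec_mulVec, hUUt, hVVt, one_mulVec, one_mulVec]
  rw [hconj, sum_sq_orthogonal_mul_mul_transpose hU hV]
  exact tail_le_sum_sq_diagonal_sub_vecMulVec hanti hnonneg _ _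

theorem exists_sum_sq_sub_vecMulVec_eq_tail (hU : Uᵀ * U = 1) (hV : Vᵀ * V = 1)
    (hA : A = U * diagonal σ * Vᵀ) :
    ∃ u v : Fin m → ℝ,
      ∑ l, ∑ i, (A - vecMulVec u v) l i ^ 2 = ∑ i ∈ univ.erase 0, σ i ^ 2 := by
  refine ⟨fun l => σ 0 * U l 0, fun i => V i 0, ?_⟩
  have hleading : vecMulVec (fun l => σ 0 * U l 0) (fun i => V i 0) =
      U * diagonal (Pi.single 0 (σ 0)) * Vᵀ := by
    ext l i
    simp [vecMulVec_apply, mul_apply, diagonal_apply, Pi.single_apply, mul_comm]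
  rw [hA, hleading, ← Matrix.sub_mul, ← Matrix.mul_sub, diagonal_sub,
    sum_sq_orthogonal_mul_mul_transpose hU hV, sum_sq_diagonal, ← add_sum_erase _ _ (mem_univ 0),
    Pi.single_eq_same, sub_self, zero_pow two_ne_zero, zero_add]
  exact sum_congr rfl fun i hi => by rw [Pi.single_eq_of_ne (ne_of_mem_erase hi), sub_zero]

theorem rank_diagonal_le_one_iff (hanti : Antitone σ) (hnonneg : ∀ i, 0 ≤ σ i) :
    (diagonal σ).rank ≤ 1 ↔ ∀ i ≠ 0, σ i = 0 := by
  rw [rank_diagonal, Fintype.card_le_one_iff]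
  constructor
  · intro h i hi
    by_contra hσi
    have hσ0 : σ 0 ≠ 0 := ((lt_of_le_of_ne (hnonneg i) (Ne.symm hσi)).trans_le
      (hanti (Fin.zero_le i))).ne'
    exact hi (congrArg Subtype.val (h ⟨i, hσi⟩ ⟨0, hσ0⟩))
  · rintro h ⟨a, ha⟩ ⟨b, hb⟩
    exact Subtype.ext ((not_imp_comm.mp (h a) ha).trans (not_imp_comm.mp (h b) hb).symm)

theorem rank_le_one_iff_tail_eq_zero (hU : Uᵀ * U = 1) (hV : Vᵀ * V = 1)
    (hA : A = U * diagonal σ * Vᵀ) (hanti : Antitone σ) (hnonneg : ∀ i, 0 ≤ σ i) :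
    A.rank ≤ 1 ↔ ∑ i ∈ univ.erase 0, σ i ^ 2 = 0 := by
  rw [hA, rank_mul_eq_left_of_isUnit_det _ _ (isUnit_det_of_right_inverse hV),
    rank_mul_eq_right_of_isUnit_det _ _ (isUnit_det_of_right_inverse (mul_eq_one_comm.mp hU)),
    rank_diagonal_le_one_iff hanti hnonneg, sum_eq_zero_iff_of_nonneg fun i _ => sq_nonneg _]
  simp
end RankOne

section Monarch
variable {m : ℕ}

theorem shuffle_mul_apply (X : Matrix (Fin m × Fin m) (Fin m × Fin m) ℝ)
    (a b : Fin m × Fin m) :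
    (shuffle m * X) a b = X a.swap b := by
  simp [shuffle, mul_apply, ← Prod.swap_eq_iff_eq_swap]

theorem monarch_apply (L R : Fin m → Matrix (Fin m) (Fin m) ℝ) (l j k i : Fin m) :
    (shuffle m * BD L * shuffle m * BD R) (l, j) (k, i) = L j l k * R k j i := by
  rw [Matrix.mul_assoc, Matrix.mul_assoc, shuffle_mul_apply]
  simp [BD, shuffle, mul_apply, Fintype.sum_prod_type, ite_mul, mul_ite, ite_and]

theorem sum_sq_sub_monarch (E : Matrix (Fin m × Fin m) (Fin m × Fin m) ℝ)
    (L R : Fin m → Matrix (Fin m) (Fin m) ℝ) :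
    ∑ p, ∑ q, (E - shuffle m * BD L * shuffle m * BD R) p q ^ 2 =
      ∑ j, ∑ k, ∑ l, ∑ i,
        ((of fun l i => E (l, j) (k, i)) - vecMulVec (fun l => L j l k) (R k j)) l i ^ 2 := by
  simp only [Fintype.sum_prod_type, Matrix.sub_apply, monarch_apply, of_apply, vecMulVec_apply]
  rw [sum_comm]
  exact sum_congr rfl fun j _ => sum_comm

end Monarch

theorem filter_one_le_val_eq_erase_zero {m : ℕ} [NeZero m] :
    univ.filter (fun i : Fin m => 1 ≤ (i : ℕ)) = univ.erase 0 := by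
  ext i
  simp [Nat.one_le_iff_ne_zero, Fin.val_eq_zero_iff]

/-- The minimal Frobenius error of approximating `E` (`n = m²`) by a square-block Monarch
matrix equals `√(∑_{j,k} ∑_{i≥2} σ_i²(Ẽ_{:,j,k,:}))`, where `Ẽ_{:,j,k,:}` are the slices of
the reshaped 4-tensor with ordered singular values `σ j k`; in particular the minimum is 0
iff every slice has rank at most 1. -/
theorem monarch_min_error (m : ℕ)
    (E : Matrix (Fin m × Fin m) (Fin m × Fin m) ℝ)
    (σ : Fin m → Fin m → Fin m → ℝ)
    (hσ : ∀ j k : Fin m, Antitone (σ j k) ∧ (∀ i, 0 ≤ σ j k i) ∧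
      ∃ U V : Matrix (Fin m) (Fin m) ℝ, Uᵀ * U = 1 ∧ Vᵀ * V = 1 ∧
        (Matrix.of fun l i : Fin m => E (l, j) (k, i)) = U * Matrix.diagonal (σ j k) * Vᵀ) :
    IsLeast {y : ℝ | ∃ L R : Fin m → Matrix (Fin m) (Fin m) ℝ,
        y = Real.sqrt (∑ i, ∑ l, ((E - shuffle m * BD L * shuffle m * BD R) i l) ^ 2)}
      (Real.sqrt (∑ j : Fin m, ∑ k : Fin m,
        ∑ i ∈ Finset.univ.filter (fun i : Fin m => 1 ≤ (i : ℕ)), (σ j k i) ^ 2)) ∧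
    (Real.sqrt (∑ j : Fin m, ∑ k : Fin m,
        ∑ i ∈ Finset.univ.filter (fun i : Fin m => 1 ≤ (i : ℕ)), (σ j k i) ^ 2) = 0 ↔
      ∀ j k : Fin m,
        (Matrix.of fun l i : Fin m => E (l, j) (k, i)).rank ≤ 1) := by
  rcases Nat.eq_zero_or_pos m with rfl | hm
  · exact ⟨⟨⟨0, 0, by simp⟩, by rintro _ ⟨L, R, rfl⟩; simp⟩, by simp⟩
  have : NeZero m := ⟨hm.ne'⟩
  choose hanti hnonneg U V hU hV hsvd using hσ
  simp only [filter_one_le_val_eq_erase_zero, sum_sq_sub_monarch]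
  refine ⟨⟨?_, ?_⟩, ?_⟩
  · choose u v huv using fun j k =>
      exists_sum_sq_sub_vecMulVec_eq_tail (hU j k) (hV j k) (hsvd j k)
    refine ⟨fun j => of fun l k => u j k l, fun k => of fun j i => v j k i, ?_⟩
    exact congrArg Real.sqrt (sum_congr rfl fun j _ => sum_congr rfl fun k _ => (huv j k).symm)
  · rintro _ ⟨L, R, rfl⟩
    gcongr with j _ k _
    exact tail_le_sum_sq_sub_vecMulVec (hU j k) (hV j k) (hsvd j k) (hanti j k) (hnonneg j k) _ _
  · have tail_nonneg (j k : Fin m) : 0 ≤ ∑ i ∈ univ.erase 0, σ j k i ^ 2 := by positivity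
    rw [Real.sqrt_eq_zero (by positivity),
      sum_eq_zero_iff_of_nonneg fun j _ => sum_nonneg fun k _ => tail_nonneg j k]
    refine forall_congr' fun j => ?_
    rw [sum_eq_zero_iff_of_nonneg fun k _ => tail_nonneg j k]
    simp only [mem_univ, true_implies]
    exact forall_congr' fun k => (rank_le_one_iff_tail_eq_zero (hU j k) (hV j k) (hsvd j k)
      (hanti j k) (hnonneg j k)).symm
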